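/- Let σ > 0 and let I : ℝ² → ℝ be C^∞ with compact support; define g̃(x) = (1/(√(2π)·σ))·exp(−‖∇I(x)‖²/(2σ²)). Let β ≥ 0, let H : ℝ² → ℝ be Lipschitz continuous and bounded, and let V̂ : ℝ² → ℝ² be Lipschitz continuous and bounded. Define, for x ∈ ℝ², nonzero p ∈ ℝ², and symmetric 2×2 real matrix X, F(x,p,X) = g̃(x)·H(x)·‖p‖ − β·g̃(x)·Tr(A(p)·X) + g̃(x)·(1 − |H(x)|)·⟨V̂(x), p⟩, where A(p) = I − (p⊗p)/‖p‖², and set ρ(p,q) = min( ‖p−q‖/min(‖p‖,‖q‖), 1 ). Then there exists a constant C ≥ 0 such that: for all symmetric 2×2 matrices X, Y and all μ₁, μ₂ ≥ 0 with [[X,0],[0,Y]] ≤ μ₁·[[I,−I],[−I,I]] + μ₂·[[I,0],[0,I]] in the Loewner order, and all x, y ∈ ℝ² and nonzero p, q ∈ ℝ², F(x,p,X) − F(y,q,−Y) ≥ −C·( μ₁·(‖x−y‖² + ρ(p,q)²) + μ₂ + ‖p−q‖ + ‖x−y‖·(1 + max(‖p‖,‖q‖)) ). -/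

import Mathlib

open scoped RealInnerProductSpace

/-- The edge weight `g̃(x) = (1/(√(2π)σ))·exp(−‖∇I(x)‖²/(2σ²))`. -/
noncomputable def edgeWeight (σ : ℝ) (I : EuclideanSpace ℝ (Fin 2) → ℝ)
    (x : EuclideanSpace ℝ (Fin 2)) : ℝ :=
  (1 / (Real.sqrt (2 * Real.pi) * σ)) * Real.exp (-‖gradient I x‖ ^ 2 / (2 * σ ^ 2))

/-- The matrix `A(p) = I − (p ⊗ p)/‖p‖²`. -/
noncomputable def projMatrix (p : EuclideanSpace ℝ (Fin 2)) : Matrix (Fin 2) (Fin 2) ℝ :=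
  1 - (‖p‖ ^ 2)⁻¹ • Matrix.of fun i j => p i * p j

/-- The Hamiltonian of the level-set equation of the GVF–geodesic active contour flow:
`F(x,p,X) = g̃(x)H(x)‖p‖ − βg̃(x)Tr(A(p)X) + g̃(x)(1−|H(x)|)⟨V̂(x),p⟩`. -/
noncomputable def gvfHamiltonian (σ β : ℝ) (I H : EuclideanSpace ℝ (Fin 2) → ℝ)
    (Vhat : EuclideanSpace ℝ (Fin 2) → EuclideanSpace ℝ (Fin 2))
    (x p : EuclideanSpace ℝ (Fin 2)) (X : Matrix (Fin 2) (Fin 2) ℝ) : ℝ :=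
  edgeWeight σ I x * H x * ‖p‖ - β * edgeWeight σ I x * (projMatrix p * X).trace
    + edgeWeight σ I x * (1 - |H x|) * ⟪Vhat x, p⟫

/-- The quantity `ρ(p,q) = min(‖p−q‖/min(‖p‖,‖q‖), 1)` of the Ishii–Sato structure
condition. -/
noncomputable def ishiiSatoRho (p q : EuclideanSpace ℝ (Fin 2)) : ℝ :=
  min (‖p - q‖ / min ‖p‖ ‖q‖) 1

/-!
In the plane `A(p) = u uᵀ` with `u` the unit vector orthogonal to `p`, so
`g̃(x) Tr(A(p) X) = ⟨ξ, X ξ⟩` for `ξ = √g̃(x) u`. Testing the matrix inequality on `(ξ, η)`, with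
`η` built in the same way from `y` and `q`, bounds the second-order part of `F(x,p,X) - F(y,q,-Y)`
by `μ₁ ‖ξ - η‖² + μ₂ (‖ξ‖² + ‖η‖²)`, and
`‖ξ - η‖ ≤ |√g̃(x) - √g̃(y)| + √g̃(y) ‖p/‖p‖ - q/‖q‖‖ ≤ L ‖x - y‖ + 2 √g̃(y) ρ(p,q)`.
Here `√g̃` is Lipschitz because it is again a Gaussian of `‖∇I‖`, a smooth function of a
compactly supported smooth map. The first-order terms only need `g̃ H` and `g̃ (1 - |H|) V̂` to be
bounded and Lipschitz.
-/

open Matrix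

theorem ContDiff.gradient {E : Type*} [NormedAddCommGroup E] [InnerProductSpace ℝ E]
    [CompleteSpace E] {f : E → ℝ} {m n : WithTop ℕ∞} (hf : ContDiff ℝ n f) (hmn : m + 1 ≤ n) :
    ContDiff ℝ m (gradient f) :=
  (InnerProductSpace.toDual ℝ E).symm.toContinuousLinearEquiv.contDiff.comp
    (hf.fderiv_right hmn)

theorem HasCompactSupport.gradient {E : Type*} [NormedAddCommGroup E] [InnerProductSpace ℝ E]
    [CompleteSpace E] {f : E → ℝ} (hf : HasCompactSupport f) :
    HasCompactSupport (gradient f) :=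
  (hf.fderiv ℝ).comp_left (map_zero _)

theorem HasCompactSupport.exists_lipschitzWith_comp {E F G : Type*}
    [NormedAddCommGroup E] [NormedSpace ℝ E] [NormedAddCommGroup F] [NormedSpace ℝ F]
    [NormedAddCommGroup G] [NormedSpace ℝ G] {f : E → F} {φ : F → G}
    (hf : HasCompactSupport f) (hf' : ContDiff ℝ 1 f) (hφ : ContDiff ℝ 1 φ) :
    ∃ K, LipschitzWith K (φ ∘ f) := by
  obtain ⟨K, hK⟩ := ContDiff.lipschitzWith_of_hasCompactSupport
    (hf.comp_left (g := fun v => φ v - φ 0) (sub_self _)) ((hφ.sub contDiff_const).comp hf')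
    one_ne_zero
  refine ⟨K, LipschitzWith.of_dist_le_mul fun x y => ?_⟩
  simpa [dist_eq_norm] using hK.dist_le_mul x y

theorem norm_smul_sub_smul_le {𝕜 F : Type*} [NormedField 𝕜] [SeminormedAddCommGroup F]
    [NormedSpace 𝕜 F] (s t : 𝕜) (u v : F) :
    ‖s • u - t • v‖ ≤ ‖s - t‖ * ‖u‖ + ‖t‖ * ‖u - v‖ := by
  calc ‖s • u - t • v‖ = ‖(s - t) • u + t • (u - v)‖ := by
        rw [sub_smul, smul_sub, sub_add_sub_cancel]
    _ ≤ ‖s - t‖ * ‖u‖ + ‖t‖ * ‖u - v‖ := by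
        simpa only [norm_smul] using norm_add_le ((s - t) • u) (t • (u - v))

theorem norm_inv_norm_smul_sub_inv_norm_smul_le {F : Type*} [NormedAddCommGroup F]
    [NormedSpace ℝ F] {p q : F} (hp : p ≠ 0) (hq : q ≠ 0) :
    ‖‖p‖⁻¹ • p - ‖q‖⁻¹ • q‖ ≤ 2 * ‖p - q‖ / ‖q‖ := by
  have hp' : 0 < ‖p‖ := norm_pos_iff.mpr hp
  have hq' : 0 < ‖q‖ := norm_pos_iff.mpr hq
  calc ‖‖p‖⁻¹ • p - ‖q‖⁻¹ • q‖ ≤ ‖‖p‖⁻¹ - ‖q‖⁻¹‖ * ‖p‖ + ‖‖q‖⁻¹‖ * ‖p - q‖ :=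
        norm_smul_sub_smul_le _ _ _ _
    _ = |‖q‖ - ‖p‖| / ‖q‖ + ‖p - q‖ / ‖q‖ := by
        rw [Real.norm_eq_abs, Real.norm_eq_abs, inv_sub_inv hp'.ne' hq'.ne', abs_div,
          abs_of_pos (mul_pos hp' hq'), abs_of_pos (inv_pos.mpr hq')]
        field_simp
    _ ≤ 2 * ‖p - q‖ / ‖q‖ := by
        have hpq : |‖q‖ - ‖p‖| ≤ ‖p - q‖ := norm_sub_rev p q ▸ abs_norm_sub_norm_le q p
        rw [← add_div, two_mul]
        gcongr

theorem norm_inv_norm_smul_sub_inv_norm_smul_le_two_mul_ishiiSatoRho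
    {p q : EuclideanSpace ℝ (Fin 2)} (hp : p ≠ 0) (hq : q ≠ 0) :
    ‖‖p‖⁻¹ • p - ‖q‖⁻¹ • q‖ ≤ 2 * ishiiSatoRho p q := by
  rw [ishiiSatoRho, mul_min_of_nonneg _ _ zero_le_two, mul_one, ← mul_div_assoc]
  refine le_min ((norm_inv_norm_smul_sub_inv_norm_smul_le hp hq).trans ?_) ?_
  · gcongr
    exact min_le_right _ _
  · calc ‖‖p‖⁻¹ • p - ‖q‖⁻¹ • q‖ ≤ ‖‖p‖⁻¹ • p‖ + ‖‖q‖⁻¹ • q‖ := norm_sub_le _ _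
      _ = 2 := by norm_num [norm_smul, hp, hq]

def BoundedLipschitzWith {E F : Type*} [SeminormedAddCommGroup E] [SeminormedAddCommGroup F]
    (K M : ℝ) (f : E → F) : Prop :=
  (∀ x y, ‖f x - f y‖ ≤ K * ‖x - y‖) ∧ ∀ x, ‖f x‖ ≤ M

namespace BoundedLipschitzWith

variable {E F : Type*} [NormedAddCommGroup E] [NormedAddCommGroup F] {K M : ℝ} {f : E → F}

theorem bound_nonneg [Nonempty E] (hf : BoundedLipschitzWith K M f) : 0 ≤ M :=
  (norm_nonneg _).trans (hf.2 (Classical.arbitrary E))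

theorem lipschitz_nonneg [Nontrivial E] (hf : BoundedLipschitzWith K M f) : 0 ≤ K := by
  obtain ⟨x, y, hxy⟩ := exists_pair_ne E
  exact nonneg_of_mul_nonneg_left ((norm_nonneg _).trans (hf.1 x y))
    (norm_pos_iff.mpr (sub_ne_zero.mpr hxy))

theorem smul [NormedSpace ℝ F] {Ka Ma : ℝ} {a : E → ℝ} (ha : BoundedLipschitzWith Ka Ma a)
    (hf : BoundedLipschitzWith K M f) :
    BoundedLipschitzWith (Ka * M + Ma * K) (Ma * M) fun x => a x • f x := by
  refine ⟨fun x y => ?_, fun x => ?_⟩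
  · have hMa : 0 ≤ Ma := (norm_nonneg _).trans (ha.2 x)
    calc ‖a x • f x - a y • f y‖ ≤ ‖a x - a y‖ * ‖f x‖ + ‖a y‖ * ‖f x - f y‖ :=
          norm_smul_sub_smul_le _ _ _ _
      _ ≤ (Ka * ‖x - y‖) * M + Ma * (K * ‖x - y‖) :=
          add_le_add
            (mul_le_mul (ha.1 x y) (hf.2 x) (norm_nonneg _) ((norm_nonneg _).trans (ha.1 x y)))
            (mul_le_mul (ha.2 y) (hf.1 x y) (norm_nonneg _) hMa)
      _ = (Ka * M + Ma * K) * ‖x - y‖ := by ring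
  · rw [norm_smul]
    exact mul_le_mul (ha.2 x) (hf.2 x) (norm_nonneg _) ((norm_nonneg _).trans (ha.2 x))

theorem const_sub (hf : BoundedLipschitzWith K M f) (c : F) :
    BoundedLipschitzWith K (‖c‖ + M) fun x => c - f x := by
  refine ⟨fun x y => ?_, fun x => (norm_sub_le _ _).trans (add_le_add_right (hf.2 x) _)⟩
  rw [sub_sub_sub_cancel_left, norm_sub_rev]
  exact hf.1 x y

theorem abs {f : E → ℝ} (hf : BoundedLipschitzWith K M f) :
    BoundedLipschitzWith K M fun x => |f x| :=
  ⟨fun x y => (abs_abs_sub_abs_le_abs_sub _ _).trans (hf.1 x y), fun x => by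
    simpa only [Real.norm_eq_abs, abs_abs] using hf.2 x⟩

theorem mul {Ka Ma : ℝ} {a b : E → ℝ} (ha : BoundedLipschitzWith Ka Ma a)
    (hb : BoundedLipschitzWith K M b) :
    BoundedLipschitzWith (Ka * M + Ma * K) (Ma * M) fun x => a x * b x :=
  ha.smul hb

theorem abs_mul_norm_sub_mul_norm_le {G : Type*} [SeminormedAddCommGroup G] {a : E → ℝ}
    (ha : BoundedLipschitzWith K M a) (x y : E) (p q : G) :
    |a x * ‖p‖ - a y * ‖q‖| ≤ K * ‖x - y‖ * ‖p‖ + M * ‖p - q‖ := by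
  calc |a x * ‖p‖ - a y * ‖q‖| ≤ ‖a x - a y‖ * ‖‖p‖‖ + ‖a y‖ * ‖‖p‖ - ‖q‖‖ :=
        norm_smul_sub_smul_le (a x) (a y) ‖p‖ ‖q‖
    _ ≤ K * ‖x - y‖ * ‖p‖ + M * ‖p - q‖ := by
        rw [norm_norm]
        gcongr
        · exact ha.1 x y
        · exact (norm_nonneg _).trans (ha.2 y)
        · exact ha.2 y
        · exact abs_norm_sub_norm_le p q

theorem abs_inner_sub_inner_le {G : Type*} [NormedAddCommGroup G] [InnerProductSpace ℝ G]
    {w : E → G} (hw : BoundedLipschitzWith K M w) (x y : E) (p q : G) :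
    |⟪w x, p⟫ - ⟪w y, q⟫| ≤ K * ‖x - y‖ * ‖p‖ + M * ‖p - q‖ := by
  calc |⟪w x, p⟫ - ⟪w y, q⟫| = |⟪w x - w y, p⟫ + ⟪w y, p - q⟫| := by
        rw [inner_sub_left, inner_sub_right, sub_add_sub_cancel]
    _ ≤ ‖w x - w y‖ * ‖p‖ + ‖w y‖ * ‖p - q‖ :=
        (abs_add_le _ _).trans (add_le_add (abs_real_inner_le_norm _ _)
          (abs_real_inner_le_norm _ _))
    _ ≤ K * ‖x - y‖ * ‖p‖ + M * ‖p - q‖ := by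
        gcongr
        · exact hw.1 x y
        · exact hw.2 y

end BoundedLipschitzWith

theorem dotProduct_mulVec_add_le_of_posSemidef_sub_fromBlocks {n : Type*} [Fintype n]
    [DecidableEq n] {X Y : Matrix n n ℝ} {μ₁ μ₂ : ℝ}
    (hM : (μ₁ • (fromBlocks 1 (-1) (-1) 1 : Matrix (n ⊕ n) (n ⊕ n) ℝ) + μ₂ • 1
      - fromBlocks X 0 0 Y).PosSemidef) (ξ η : EuclideanSpace ℝ n) :
    ξ.ofLp ⬝ᵥ X *ᵥ ξ.ofLp + η.ofLp ⬝ᵥ Y *ᵥ η.ofLp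
      ≤ μ₁ * ‖ξ - η‖ ^ 2 + μ₂ * (‖ξ‖ ^ 2 + ‖η‖ ^ 2) := by
  have h := hM.dotProduct_mulVec_nonneg (Sum.elim ξ.ofLp η.ofLp)
  simp only [← real_inner_self_eq_norm_sq, EuclideanSpace.inner_eq_star_dotProduct, star_trivial,
    WithLp.ofLp_sub, dotProduct_sub, sub_dotProduct, dotProduct_comm η.ofLp ξ.ofLp]
  simp only [star_trivial, sub_mulVec, add_mulVec, smul_mulVec, fromBlocks_mulVec,
    Sum.elim_comp_inl, Sum.elim_comp_inr, one_mulVec, neg_mulVec, zero_mulVec, add_zero, zero_add,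
    dotProduct_sub, dotProduct_add, dotProduct_smul, sumElim_dotProduct_sumElim, dotProduct_neg,
    dotProduct_comm η.ofLp ξ.ofLp, smul_eq_mul, sub_nonneg] at h
  linarith

theorem EuclideanSpace.norm_sq_fin_two (v : EuclideanSpace ℝ (Fin 2)) :
    ‖v‖ ^ 2 = v 0 ^ 2 + v 1 ^ 2 := by
  simp [EuclideanSpace.norm_sq_eq, Fin.sum_univ_two]

noncomputable def rightAngleRotation :
    EuclideanSpace ℝ (Fin 2) →ₗᵢ[ℝ] EuclideanSpace ℝ (Fin 2) where
  toFun v := !₂[-v 1, v 0]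
  map_add' v w := by ext i; fin_cases i <;> simp [add_comm]
  map_smul' a v := by ext i; fin_cases i <;> simp
  norm_map' v := by
    rw [← sq_eq_sq₀ (norm_nonneg _) (norm_nonneg _)]
    simp only [LinearMap.coe_mk, AddHom.coe_mk, EuclideanSpace.norm_sq_fin_two, cons_val_zero,
      cons_val_one, cons_val_fin_one, neg_sq]
    ring

theorem trace_projMatrix_mul {p : EuclideanSpace ℝ (Fin 2)} (hp : p ≠ 0)
    (X : Matrix (Fin 2) (Fin 2) ℝ) :
    (projMatrix p * X).trace
      = (rightAngleRotation (‖p‖⁻¹ • p)).ofLp ⬝ᵥ X *ᵥ (rightAngleRotation (‖p‖⁻¹ • p)).ofLp := by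
  have hp' : ‖p‖ ≠ 0 := norm_ne_zero_iff.mpr hp
  have hn := EuclideanSpace.norm_sq_fin_two p
  simp only [projMatrix, rightAngleRotation, trace_fin_two, Matrix.mul_apply, Matrix.sub_apply,
    smul_of, of_apply, Pi.smul_apply, smul_eq_mul, Fin.sum_univ_two, one_apply_eq, one_apply_ne,
    ne_eq, zero_ne_one, one_ne_zero, not_false_eq_true, zero_sub, neg_mul, mul_neg, dotProduct,
    map_smul, LinearIsometry.coe_mk, LinearMap.coe_mk, AddHom.coe_mk, PiLp.smul_apply, mulVec,
    cons_val_zero, cons_val_one, cons_val_fin_one]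
  field_simp
  rw [hn]
  ring

theorem sq_mul_trace_projMatrix_mul {p : EuclideanSpace ℝ (Fin 2)} (hp : p ≠ 0)
    (X : Matrix (Fin 2) (Fin 2) ℝ) (s : ℝ) :
    s ^ 2 * (projMatrix p * X).trace
      = (s • rightAngleRotation (‖p‖⁻¹ • p)).ofLp
          ⬝ᵥ X *ᵥ (s • rightAngleRotation (‖p‖⁻¹ • p)).ofLp := by
  simp only [trace_projMatrix_mul hp, WithLp.ofLp_smul, mulVec_smul, dotProduct_smul,
    smul_dotProduct, smul_eq_mul]
  ring

theorem sq_mul_trace_projMatrix_add_le {X Y : Matrix (Fin 2) (Fin 2) ℝ} {μ₁ μ₂ : ℝ}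
    (hμ₁ : 0 ≤ μ₁)
    (hM : (μ₁ • (fromBlocks 1 (-1) (-1) 1 : Matrix (Fin 2 ⊕ Fin 2) (Fin 2 ⊕ Fin 2) ℝ) + μ₂ • 1
      - fromBlocks X 0 0 Y).PosSemidef)
    {p q : EuclideanSpace ℝ (Fin 2)} (hp : p ≠ 0) (hq : q ≠ 0) (s : ℝ) {t : ℝ} (ht : 0 ≤ t) :
    s ^ 2 * (projMatrix p * X).trace + t ^ 2 * (projMatrix q * Y).trace
      ≤ μ₁ * (2 * (s - t) ^ 2 + 8 * t ^ 2 * ishiiSatoRho p q ^ 2) + μ₂ * (s ^ 2 + t ^ 2) := by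
  set u := ‖p‖⁻¹ • p
  set v := ‖q‖⁻¹ • q
  have hu : ‖u‖ = 1 := by simp [u, norm_smul, hp]
  have hv : ‖v‖ = 1 := by simp [v, norm_smul, hq]
  have hdiff : ‖s • u - t • v‖ ≤ |s - t| + t * (2 * ishiiSatoRho p q) := by
    calc ‖s • u - t • v‖ ≤ ‖s - t‖ * ‖u‖ + ‖t‖ * ‖u - v‖ := norm_smul_sub_smul_le _ _ _ _
      _ ≤ |s - t| + t * (2 * ishiiSatoRho p q) := by
        rw [hu, mul_one, Real.norm_eq_abs, Real.norm_eq_abs, abs_of_nonneg ht]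
        gcongr
        exact norm_inv_norm_smul_sub_inv_norm_smul_le_two_mul_ishiiSatoRho hp hq
  have hsq : ‖s • u - t • v‖ ^ 2 ≤ 2 * (s - t) ^ 2 + 8 * t ^ 2 * ishiiSatoRho p q ^ 2 := by
    nlinarith [norm_nonneg (s • u - t • v), sq_abs (s - t), abs_nonneg (s - t),
      sq_nonneg (|s - t| - t * (2 * ishiiSatoRho p q))]
  have h := dotProduct_mulVec_add_le_of_posSemidef_sub_fromBlocks hM
    (s • rightAngleRotation u) (t • rightAngleRotation v)
  rw [← sq_mul_trace_projMatrix_mul hp, ← sq_mul_trace_projMatrix_mul hq,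
    ← map_smul, ← map_smul, ← map_sub, LinearIsometry.norm_map, LinearIsometry.norm_map,
    LinearIsometry.norm_map, norm_smul s u, norm_smul t v, hu, hv, Real.norm_eq_abs,
    Real.norm_eq_abs, mul_one, mul_one, sq_abs, sq_abs] at h
  nlinarith [mul_le_mul_of_nonneg_left hsq hμ₁]

section EdgeWeight

variable {σ : ℝ} {I : EuclideanSpace ℝ (Fin 2) → ℝ}

theorem edgeWeight_nonneg (hσ : 0 ≤ σ) (x : EuclideanSpace ℝ (Fin 2)) :
    0 ≤ edgeWeight σ I x := by
  unfold edgeWeight; positivity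

theorem edgeWeight_le (hσ : 0 ≤ σ) (x : EuclideanSpace ℝ (Fin 2)) :
    edgeWeight σ I x ≤ 1 / (Real.sqrt (2 * Real.pi) * σ) := by
  refine mul_le_of_le_one_right (by positivity) (Real.exp_le_one_iff.mpr ?_)
  exact div_nonpos_of_nonpos_of_nonneg (neg_nonpos.mpr (by positivity)) (by positivity)

theorem sqrt_edgeWeight (hσ : 0 ≤ σ) (x : EuclideanSpace ℝ (Fin 2)) :
    Real.sqrt (edgeWeight σ I x) = Real.sqrt (1 / (Real.sqrt (2 * Real.pi) * σ))
      * Real.exp (-‖gradient I x‖ ^ 2 / (2 * σ ^ 2) / 2) := by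
  rw [edgeWeight, Real.sqrt_mul (by positivity), Real.exp_half]

theorem exists_lipschitzWith_edgeWeight (hI : ContDiff ℝ 2 I) (hIc : HasCompactSupport I) :
    ∃ K, LipschitzWith K (edgeWeight σ I) := by
  have := contDiff_norm_sq ℝ (E := EuclideanSpace ℝ (Fin 2)) (n := 1)
  exact hIc.gradient.exists_lipschitzWith_comp (hI.gradient (by norm_num))
    (φ := fun v => 1 / (Real.sqrt (2 * Real.pi) * σ) * Real.exp (-‖v‖ ^ 2 / (2 * σ ^ 2)))
    (by fun_prop)

theorem exists_lipschitzWith_sqrt_edgeWeight (hσ : 0 ≤ σ) (hI : ContDiff ℝ 2 I)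
    (hIc : HasCompactSupport I) : ∃ K, LipschitzWith K fun x => Real.sqrt (edgeWeight σ I x) := by
  have := contDiff_norm_sq ℝ (E := EuclideanSpace ℝ (Fin 2)) (n := 1)
  simp_rw [sqrt_edgeWeight hσ]
  exact hIc.gradient.exists_lipschitzWith_comp (hI.gradient (by norm_num))
    (φ := fun v => Real.sqrt (1 / (Real.sqrt (2 * Real.pi) * σ))
      * Real.exp (-‖v‖ ^ 2 / (2 * σ ^ 2) / 2))
    (by fun_prop)

theorem exists_boundedLipschitzWith_edgeWeight (hσ : 0 ≤ σ) (hI : ContDiff ℝ 2 I)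
    (hIc : HasCompactSupport I) :
    ∃ K, BoundedLipschitzWith K (1 / (Real.sqrt (2 * Real.pi) * σ)) (edgeWeight σ I) := by
  obtain ⟨K, hK⟩ := exists_lipschitzWith_edgeWeight (σ := σ) hI hIc
  refine ⟨K, fun x y => by simpa only [dist_eq_norm] using hK.dist_le_mul x y, fun x => ?_⟩
  rw [Real.norm_eq_abs, abs_of_nonneg (edgeWeight_nonneg hσ x)]
  exact edgeWeight_le hσ x

end EdgeWeight

theorem edgeWeight_mul_trace_projMatrix_add_le {σ : ℝ} (hσ : 0 ≤ σ)
    {I : EuclideanSpace ℝ (Fin 2) → ℝ} {L : NNReal}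
    (hL : LipschitzWith L fun x => Real.sqrt (edgeWeight σ I x))
    {X Y : Matrix (Fin 2) (Fin 2) ℝ} {μ₁ μ₂ : ℝ} (hμ₁ : 0 ≤ μ₁) (hμ₂ : 0 ≤ μ₂)
    (hM : (μ₁ • (fromBlocks 1 (-1) (-1) 1 : Matrix (Fin 2 ⊕ Fin 2) (Fin 2 ⊕ Fin 2) ℝ) + μ₂ • 1
      - fromBlocks X 0 0 Y).PosSemidef)
    (x y : EuclideanSpace ℝ (Fin 2)) {p q : EuclideanSpace ℝ (Fin 2)} (hp : p ≠ 0) (hq : q ≠ 0) :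
    edgeWeight σ I x * (projMatrix p * X).trace + edgeWeight σ I y * (projMatrix q * Y).trace
      ≤ (2 * L ^ 2 + 8 * (1 / (Real.sqrt (2 * Real.pi) * σ)))
          * (μ₁ * (‖x - y‖ ^ 2 + ishiiSatoRho p q ^ 2))
        + 2 * (1 / (Real.sqrt (2 * Real.pi) * σ)) * μ₂ := by
  have h := sq_mul_trace_projMatrix_add_le hμ₁ hM hp hq (Real.sqrt (edgeWeight σ I x))
    (Real.sqrt_nonneg (edgeWeight σ I y))
  rw [Real.sq_sqrt (edgeWeight_nonneg hσ x), Real.sq_sqrt (edgeWeight_nonneg hσ y)] at h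
  have hsqrt : (Real.sqrt (edgeWeight σ I x) - Real.sqrt (edgeWeight σ I y)) ^ 2
      ≤ L ^ 2 * ‖x - y‖ ^ 2 := by
    rw [← mul_pow, ← sq_abs]
    gcongr
    simpa only [dist_eq_norm, Real.norm_eq_abs] using hL.dist_le_mul x y
  have hgx := edgeWeight_le (I := I) hσ x
  have hgy := edgeWeight_le (I := I) hσ y
  have hμρ : 0 ≤ μ₁ * ishiiSatoRho p q ^ 2 := by positivity
  linarith [mul_le_mul_of_nonneg_left hsqrt hμ₁, mul_le_mul_of_nonneg_left hgx hμ₂,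
    mul_le_mul_of_nonneg_left hgy hμ₂, mul_le_mul_of_nonneg_left hgy hμρ,
    mul_nonneg hμρ (sq_nonneg (L : ℝ)),
    (by positivity : 0 ≤ 1 / (Real.sqrt (2 * Real.pi) * σ) * (μ₁ * ‖x - y‖ ^ 2))]

theorem gvfHamiltonian_sub_gvfHamiltonian_neg (σ β : ℝ) (I H : EuclideanSpace ℝ (Fin 2) → ℝ)
    (Vhat : EuclideanSpace ℝ (Fin 2) → EuclideanSpace ℝ (Fin 2))
    (x y p q : EuclideanSpace ℝ (Fin 2)) (X Y : Matrix (Fin 2) (Fin 2) ℝ) :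
    gvfHamiltonian σ β I H Vhat x p X - gvfHamiltonian σ β I H Vhat y q (-Y)
      = (edgeWeight σ I x * H x * ‖p‖ - edgeWeight σ I y * H y * ‖q‖)
        + (⟪(edgeWeight σ I x * (1 - |H x|)) • Vhat x, p⟫
          - ⟪(edgeWeight σ I y * (1 - |H y|)) • Vhat y, q⟫)
        - β * (edgeWeight σ I x * (projMatrix p * X).trace
          + edgeWeight σ I y * (projMatrix q * Y).trace) := by
  simp only [gvfHamiltonian, Matrix.mul_neg, Matrix.trace_neg, real_inner_smul_left]
  ring

theorem gvfHamiltonian_sub_gvfHamiltonian_neg_ge {σ β : ℝ} (hσ : 0 ≤ σ) (hβ : 0 ≤ β)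
    {I H : EuclideanSpace ℝ (Fin 2) → ℝ}
    {Vhat : EuclideanSpace ℝ (Fin 2) → EuclideanSpace ℝ (Fin 2)} {Ka Ma Kw Mw : ℝ} {L : NNReal}
    (ha : BoundedLipschitzWith Ka Ma fun x => edgeWeight σ I x * H x)
    (hw : BoundedLipschitzWith Kw Mw fun x => (edgeWeight σ I x * (1 - |H x|)) • Vhat x)
    (hL : LipschitzWith L fun x => Real.sqrt (edgeWeight σ I x))
    {X Y : Matrix (Fin 2) (Fin 2) ℝ} {μ₁ μ₂ : ℝ} (hμ₁ : 0 ≤ μ₁) (hμ₂ : 0 ≤ μ₂)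
    (hM : (μ₁ • (fromBlocks 1 (-1) (-1) 1 : Matrix (Fin 2 ⊕ Fin 2) (Fin 2 ⊕ Fin 2) ℝ) + μ₂ • 1
      - fromBlocks X 0 0 Y).PosSemidef)
    (x y : EuclideanSpace ℝ (Fin 2)) {p q : EuclideanSpace ℝ (Fin 2)} (hp : p ≠ 0) (hq : q ≠ 0) :
    gvfHamiltonian σ β I H Vhat x p X - gvfHamiltonian σ β I H Vhat y q (-Y)
      ≥ -(Ka + Kw + Ma + Mw
          + β * (2 * L ^ 2 + 10 * (1 / (Real.sqrt (2 * Real.pi) * σ))))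
        * (μ₁ * (‖x - y‖ ^ 2 + ishiiSatoRho p q ^ 2) + μ₂ + ‖p - q‖
          + ‖x - y‖ * (1 + max ‖p‖ ‖q‖)) := by
  set c := 1 / (Real.sqrt (2 * Real.pi) * σ)
  set S := μ₁ * (‖x - y‖ ^ 2 + ishiiSatoRho p q ^ 2) + μ₂ + ‖p - q‖
    + ‖x - y‖ * (1 + max ‖p‖ ‖q‖)
  have h₁ := (abs_le.mp (ha.abs_mul_norm_sub_mul_norm_le x y p q)).1
  have h₂ := (abs_le.mp (hw.abs_inner_sub_inner_le x y p q)).1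
  have h₃ := mul_le_mul_of_nonneg_left
    (edgeWeight_mul_trace_projMatrix_add_le hσ hL hμ₁ hμ₂ hM x y hp hq) hβ
  have hμ : 0 ≤ μ₁ * (‖x - y‖ ^ 2 + ishiiSatoRho p q ^ 2) := by positivity
  have hxp : 0 ≤ ‖x - y‖ * ‖p‖ := by positivity
  have hxp' : ‖x - y‖ * ‖p‖ ≤ ‖x - y‖ * (1 + max ‖p‖ ‖q‖) := by
    gcongr
    linarith [le_max_left ‖p‖ ‖q‖]
  have hpq := norm_nonneg (p - q)
  have hS₁ : μ₁ * (‖x - y‖ ^ 2 + ishiiSatoRho p q ^ 2) ≤ S := by linarith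
  have hS₂ : μ₂ ≤ S := by linarith
  have hS₃ : ‖p - q‖ ≤ S := by linarith
  have hS₄ : ‖x - y‖ * ‖p‖ ≤ S := by linarith
  rw [gvfHamiltonian_sub_gvfHamiltonian_neg]
  linarith [mul_le_mul_of_nonneg_left hS₁ (by positivity : 0 ≤ β * (2 * (L : ℝ) ^ 2 + 8 * c)),
    mul_le_mul_of_nonneg_left hS₂ (by positivity : 0 ≤ β * (2 * c)),
    mul_le_mul_of_nonneg_left hS₃ ha.bound_nonneg, mul_le_mul_of_nonneg_left hS₃ hw.bound_nonneg,
    mul_le_mul_of_nonneg_left hS₄ ha.lipschitz_nonneg,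
    mul_le_mul_of_nonneg_left hS₄ hw.lipschitz_nonneg]

/-- hypothesis (H3) of the Ishii–Sato theorem for the GVF–geodesic
Hamiltonian: there is a constant `C ≥ 0` such that whenever
`[[X,0],[0,Y]] ≤ μ₁[[I,−I],[−I,I]] + μ₂[[I,0],[0,I]]` in the Loewner order,
`F(x,p,X) − F(y,q,−Y) ≥ −C(μ₁(‖x−y‖² + ρ(p,q)²) + μ₂ + ‖p−q‖ + ‖x−y‖(1 + max(‖p‖,‖q‖)))`. -/
theorem gvfHamiltonian_ishiiSato_H3
    (σ : ℝ) (hσ : 0 < σ)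
    (I : EuclideanSpace ℝ (Fin 2) → ℝ)
    (hI : ContDiff ℝ (⊤ : ℕ∞) I) (hIc : HasCompactSupport I)
    (β : ℝ) (hβ : 0 ≤ β)
    (H : EuclideanSpace ℝ (Fin 2) → ℝ)
    (KH : ℝ) (hHlip : ∀ x y, |H x - H y| ≤ KH * ‖x - y‖)
    (MH : ℝ) (hHbd : ∀ x, |H x| ≤ MH)
    (Vhat : EuclideanSpace ℝ (Fin 2) → EuclideanSpace ℝ (Fin 2))
    (KV : ℝ) (hVlip : ∀ x y, ‖Vhat x - Vhat y‖ ≤ KV * ‖x - y‖)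
    (MV : ℝ) (hVbd : ∀ x, ‖Vhat x‖ ≤ MV) :
    ∃ C : ℝ, 0 ≤ C ∧
      ∀ (X Y : Matrix (Fin 2) (Fin 2) ℝ), X.IsSymm → Y.IsSymm →
      ∀ μ₁ μ₂ : ℝ, 0 ≤ μ₁ → 0 ≤ μ₂ →
      (μ₁ • (Matrix.fromBlocks 1 (-1) (-1) 1 : Matrix (Fin 2 ⊕ Fin 2) (Fin 2 ⊕ Fin 2) ℝ)
          + μ₂ • (1 : Matrix (Fin 2 ⊕ Fin 2) (Fin 2 ⊕ Fin 2) ℝ)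
          - Matrix.fromBlocks X 0 0 Y).PosSemidef →
      ∀ (x y p q : EuclideanSpace ℝ (Fin 2)), p ≠ 0 → q ≠ 0 →
        gvfHamiltonian σ β I H Vhat x p X - gvfHamiltonian σ β I H Vhat y q (-Y)
          ≥ -C * (μ₁ * (‖x - y‖ ^ 2 + ishiiSatoRho p q ^ 2) + μ₂ + ‖p - q‖
              + ‖x - y‖ * (1 + max ‖p‖ ‖q‖)) := by
  have hI₂ : ContDiff ℝ 2 I := hI.of_le (by norm_cast)
  have hH : BoundedLipschitzWith KH MH H := ⟨hHlip, hHbd⟩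
  obtain ⟨Kg, hg⟩ := exists_boundedLipschitzWith_edgeWeight hσ.le hI₂ hIc
  obtain ⟨L, hL⟩ := exists_lipschitzWith_sqrt_edgeWeight hσ.le hI₂ hIc
  obtain ⟨Ka, Ma, ha⟩ : ∃ K M, BoundedLipschitzWith K M fun x => edgeWeight σ I x * H x :=
    ⟨_, _, hg.mul hH⟩
  obtain ⟨Kw, Mw, hw⟩ : ∃ K M, BoundedLipschitzWith K M
      fun x => (edgeWeight σ I x * (1 - |H x|)) • Vhat x :=
    ⟨_, _, (hg.mul (hH.abs.const_sub 1)).smul ⟨hVlip, hVbd⟩⟩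
  refine ⟨_, ?_, fun X Y _ _ μ₁ μ₂ hμ₁ hμ₂ hM x y p q hp hq =>
    gvfHamiltonian_sub_gvfHamiltonian_neg_ge hσ.le hβ ha hw hL hμ₁ hμ₂ hM x y hp hq⟩
  have hKa := ha.lipschitz_nonneg
  have hKw := hw.lipschitz_nonneg
  have hMa := ha.bound_nonneg
  have hMw := hw.bound_nonneg
  positivity
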